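/- For every λ ≥ 0, the function φ(λ) = √(2/π) ∫_λ^∞ (x − λ)² exp(−x²/2) dx satisfies φ(λ) ≤ 1 + λ² − λ·√(2/π). -/

import Mathlib

/-!
Enlarging the domain of integration from `(λ, ∞)` to `(0, ∞)` gives
`φ(λ) ≤ √(2/π) ∫₀^∞ (x - λ)² e^{-x²/2} dx = E (|Z| - λ)² = 1 + λ² - 2λ√(2/π)` for a standard
normal `Z`, since the half-line Gaussian moments are `∫₀^∞ xⁿ e^{-x²/2} dx = 2^{(n-1)/2} Γ((n+1)/2)`.
-/

open MeasureTheory ProbabilityTheory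
open scoped Pointwise BigOperators

noncomputable section

def phi (t : ℝ) : ℝ :=
  Real.sqrt (2 / Real.pi) * ∫ x in Set.Ioi t, (x - t) ^ 2 * Real.exp (-x ^ 2 / 2)

open Real Set

lemma neg_sq_div_two_eq_neg_half_mul_rpow_two (x : ℝ) : -x ^ 2 / 2 = -(1 / 2) * x ^ (2 : ℝ) := by
  rw [rpow_two]; ring

lemma integrableOn_pow_mul_exp_neg_sq_div_two (n : ℕ) :
    IntegrableOn (fun x : ℝ => x ^ n * exp (-x ^ 2 / 2)) (Ioi 0) := by
  simpa [neg_sq_div_two_eq_neg_half_mul_rpow_two] using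
    integrableOn_rpow_mul_exp_neg_mul_rpow (s := n) (by linarith [n.cast_nonneg (α := ℝ)])
      two_pos one_half_pos

lemma integral_pow_mul_exp_neg_sq_div_two_Ioi (n : ℕ) :
    ∫ x in Ioi (0 : ℝ), x ^ n * exp (-x ^ 2 / 2) =
      2 ^ (((n : ℝ) - 1) / 2) * Gamma ((n + 1) / 2) := by
  have h := integral_rpow_mul_exp_neg_mul_rpow (q := n) two_pos
    (by linarith [n.cast_nonneg (α := ℝ)]) one_half_pos
  simp only [rpow_natCast, ← neg_sq_div_two_eq_neg_half_mul_rpow_two] at h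
  rw [h, one_div, inv_rpow zero_le_two, ← rpow_neg zero_le_two, ← rpow_neg_one 2,
    mul_comm (2 ^ _) (2 ^ _), ← rpow_add two_pos]
  ring_nf

lemma integral_exp_neg_sq_div_two_Ioi :
    ∫ x in Ioi (0 : ℝ), exp (-x ^ 2 / 2) = √(π / 2) := by
  have h := integral_pow_mul_exp_neg_sq_div_two_Ioi 0
  simp only [pow_zero, one_mul, Nat.cast_zero] at h
  rw [h, zero_sub, zero_add, Gamma_one_half_eq, neg_div, rpow_neg zero_le_two, ← sqrt_eq_rpow,
    sqrt_div' _ zero_le_two]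
  ring

lemma integral_mul_exp_neg_sq_div_two_Ioi :
    ∫ x in Ioi (0 : ℝ), x * exp (-x ^ 2 / 2) = 1 := by
  simpa using integral_pow_mul_exp_neg_sq_div_two_Ioi 1

lemma integral_sq_mul_exp_neg_sq_div_two_Ioi :
    ∫ x in Ioi (0 : ℝ), x ^ 2 * exp (-x ^ 2 / 2) = √(π / 2) := by
  have h : ((2 : ℕ) + 1 : ℝ) / 2 = 1 / 2 + 1 := by norm_num
  rw [integral_pow_mul_exp_neg_sq_div_two_Ioi, sqrt_div' _ zero_le_two, h,
    Gamma_add_one one_half_pos.ne', Gamma_one_half_eq]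
  norm_num [← sqrt_eq_rpow]
  field_simp
  rw [sq_sqrt zero_le_two]

lemma sub_sq_mul_exp_neg_sq_div_two_eq (l x : ℝ) :
    (x - l) ^ 2 * exp (-x ^ 2 / 2) =
      x ^ 2 * exp (-x ^ 2 / 2) - 2 * l * (x * exp (-x ^ 2 / 2)) + l ^ 2 * exp (-x ^ 2 / 2) := by
  ring

lemma integrableOn_sub_sq_mul_exp_neg_sq_div_two (l : ℝ) :
    IntegrableOn (fun x : ℝ => (x - l) ^ 2 * exp (-x ^ 2 / 2)) (Ioi 0) := by
  have h0 := integrableOn_pow_mul_exp_neg_sq_div_two 0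
  have h1 := integrableOn_pow_mul_exp_neg_sq_div_two 1
  simp only [pow_zero, pow_one, one_mul] at h0 h1
  simp_rw [sub_sq_mul_exp_neg_sq_div_two_eq l]
  exact ((integrableOn_pow_mul_exp_neg_sq_div_two 2).sub (h1.const_mul _)).add (h0.const_mul _)

lemma sqrt_two_div_pi_mul_integral_sub_sq_mul_exp_neg_sq_div_two_Ioi (l : ℝ) :
    √(2 / π) * ∫ x in Ioi (0 : ℝ), (x - l) ^ 2 * exp (-x ^ 2 / 2) =
      1 + l ^ 2 - 2 * l * √(2 / π) := by
  have h0 := integrableOn_pow_mul_exp_neg_sq_div_two 0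
  have h1 := integrableOn_pow_mul_exp_neg_sq_div_two 1
  have h2 := integrableOn_pow_mul_exp_neg_sq_div_two 2
  simp only [pow_zero, pow_one, one_mul] at h0 h1
  simp_rw [sub_sq_mul_exp_neg_sq_div_two_eq l]
  rw [integral_add (h2.fun_sub (h1.const_mul _)) (h0.const_mul _),
    integral_sub h2 (h1.const_mul _), integral_const_mul, integral_const_mul,
    integral_sq_mul_exp_neg_sq_div_two_Ioi, integral_mul_exp_neg_sq_div_two_Ioi,
    integral_exp_neg_sq_div_two_Ioi]
  have hc : √(2 / π) * √(π / 2) = 1 := by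
    rw [← sqrt_mul (by positivity), div_mul_div_comm, mul_comm 2 π, div_self (by positivity),
      sqrt_one]
  linear_combination (1 + l ^ 2) * hc

lemma phi_le_one_add_sq_sub_two_mul {l : ℝ} (hl : 0 ≤ l) :
    phi l ≤ 1 + l ^ 2 - 2 * l * √(2 / π) := by
  rw [← sqrt_two_div_pi_mul_integral_sub_sq_mul_exp_neg_sq_div_two_Ioi, phi]
  gcongr ?_ * ?_
  exact setIntegral_mono_set (integrableOn_sub_sq_mul_exp_neg_sq_div_two l)
    (Filter.Eventually.of_forall fun x => by positivity)
    (Filter.Eventually.of_forall (Ioi_subset_Ioi hl))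

theorem phi_upper_bound (l : ℝ) (hl : 0 ≤ l) :
    phi l ≤ 1 + l ^ 2 - l * Real.sqrt (2 / Real.pi) := by
  linarith [phi_le_one_add_sq_sub_two_mul hl, mul_nonneg hl (sqrt_nonneg (2 / π))]

end
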